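/- arXiv:1807.00130 — 2 statements merged into one kernel-verified Lean document; each statement's English description precedes it below -/
import Mathlib

section
/- Fix natural numbers n ≥ 1 and ε, data y : ZMod n → ℝ, and λ ≥ 0, and fix constant explainers c : ZMod n → ℝ. The symmetric-game predictor objective J(f′) = Σ_t [(f′(t) − y(t))² + (λ/(2ε+1)) · Σ_{s=−ε}^{ε} (f′(t+s) − c(t))²] has a unique minimizer over all f′ : ZMod n → ℝ, given pointwise by f′(u) = (y(u) + λ·(A c)(u))/(1+λ), where (A c)(u) = (1/(2ε+1)) · Σ_{s = −ε}^{ε} c(u + s). -/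
/-!
Reindexing `t + s ↦ u` and using the symmetry of the window `[-ε, ε]`, the objective splits as a
sum over `u` of one-variable quadratics in `f' u`, each with leading coefficient `1 + λ > 0` and
vertex `(y u + λ (A c) u) / (1 + λ)`. Hence `J f' = J f⋆ + (1 + λ) ∑ᵤ (f' u - f⋆ u)²`.
-/

/-- The window-averaging operator `A` on functions `ZMod n → ℝ`:
`(A f)(t) = (1/(2ε+1)) · ∑_{s = -ε}^{ε} f(t + s)`. -/
noncomputable def winAvg (n ε : ℕ) (f : ZMod n → ℝ) : ZMod n → ℝ :=
  fun t => (1 / (2 * (ε : ℝ) + 1)) * ∑ s ∈ Finset.Icc (-(ε : ℤ)) (ε : ℤ), f (t + (s : ZMod n))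

/-- The symmetric-game predictor objective for fixed constant explainers `c`:
`J(f') = ∑_t [(f'(t) - y(t))² + (λ/(2ε+1)) ∑_{s=-ε}^{ε} (f'(t+s) - c(t))²]`. -/
noncomputable def symObjective (n ε : ℕ) [NeZero n] (y : ZMod n → ℝ) (lam : ℝ)
    (c : ZMod n → ℝ) (f' : ZMod n → ℝ) : ℝ :=
  ∑ t : ZMod n, ((f' t - y t) ^ 2 +
    (lam / (2 * (ε : ℝ) + 1)) *
      ∑ s ∈ Finset.Icc (-(ε : ℤ)) (ε : ℤ), (f' (t + (s : ZMod n)) - c t) ^ 2)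

open Finset

theorem Finset.sum_Icc_neg_comp {α M : Type*} [AddCommGroup α] [LinearOrder α]
    [IsOrderedAddMonoid α] [LocallyFiniteOrder α] [AddCommMonoid M] (a : α) (h : α → M) :
    ∑ s ∈ Icc (-a) a, h (-s) = ∑ s ∈ Icc (-a) a, h s :=
  sum_equiv (Equiv.neg α) (fun s => by simp [neg_le, and_comm]) (fun _ _ => rfl)

theorem Fintype.sum_sum_comp_add {G ι M : Type*} [AddCommGroup G] [Fintype G] [AddCommMonoid M]
    (S : Finset ι) (φ : ι → G) (F : G → G → M) :
    ∑ t, ∑ s ∈ S, F (t + φ s) t = ∑ u, ∑ s ∈ S, F u (u - φ s) := by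
  rw [Finset.sum_comm]
  conv_rhs => rw [Finset.sum_comm]
  refine Finset.sum_congr rfl fun s _ => Fintype.sum_equiv (Equiv.addRight (φ s)) _ _ fun t => ?_
  simp

theorem sq_sub_add_div_card_mul_sum_sq_sub {ι : Type*} {S : Finset ι} (hS : S.Nonempty)
    {lam : ℝ} (hlam : 1 + lam ≠ 0) {a m : ℝ} {b : ι → ℝ}
    (hm : m = (a + lam * ((#S : ℝ)⁻¹ * ∑ s ∈ S, b s)) / (1 + lam)) (x : ℝ) :
    (x - a) ^ 2 + lam / #S * ∑ s ∈ S, (x - b s) ^ 2 =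
      (1 + lam) * (x - m) ^ 2 + ((m - a) ^ 2 + lam / #S * ∑ s ∈ S, (m - b s) ^ 2) := by
  have hS : (#S : ℝ) ≠ 0 := by exact_mod_cast hS.card_pos.ne'
  have expand (z : ℝ) : ∑ s ∈ S, (z - b s) ^ 2 =
      #S * z ^ 2 - 2 * z * ∑ s ∈ S, b s + ∑ s ∈ S, b s ^ 2 := by
    simp only [sub_sq, sum_add_distrib, sum_sub_distrib, sum_const, nsmul_eq_mul, ← mul_sum]
  rw [expand, expand, hm]
  field_simp
  ring

theorem natCast_card_Icc_neg (ε : ℕ) : (#(Icc (-(ε : ℤ)) ε) : ℝ) = 2 * ε + 1 := by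
  rw [Int.card_Icc, show (ε : ℤ) + 1 - -ε = ((2 * ε + 1 : ℕ) : ℤ) by push_cast; ring, Int.toNat_natCast]
  push_cast
  ring

theorem symObjective_eq_sum (n ε : ℕ) [NeZero n] (y : ZMod n → ℝ) (lam : ℝ) (c f : ZMod n → ℝ) :
    symObjective n ε y lam c f = ∑ u, ((f u - y u) ^ 2 +
      lam / #(Icc (-(ε : ℤ)) ε) * ∑ s ∈ Icc (-(ε : ℤ)) ε, (f u - c (u + s)) ^ 2) := by
  rw [symObjective, natCast_card_Icc_neg, sum_add_distrib, sum_add_distrib, ← mul_sum, ← mul_sum,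
    Fintype.sum_sum_comp_add _ _ fun v t => (f v - c t) ^ 2]
  congr 2
  refine Finset.sum_congr rfl fun u _ => ?_
  rw [← sum_Icc_neg_comp]
  simp [sub_neg_eq_add]

theorem winAvg_eq_mean (n ε : ℕ) (c : ZMod n → ℝ) (u : ZMod n) :
    winAvg n ε c u = (#(Icc (-(ε : ℤ)) ε) : ℝ)⁻¹ * ∑ s ∈ Icc (-(ε : ℤ)) ε, c (u + s) := by
  rw [winAvg, natCast_card_Icc_neg, one_div]

theorem symObjective_eq_add_sum_sq (n ε : ℕ) [NeZero n] (y : ZMod n → ℝ) {lam : ℝ}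
    (hlam : 1 + lam ≠ 0) (c : ZMod n → ℝ) {fstar : ZMod n → ℝ}
    (hstar : ∀ u, fstar u = (y u + lam * winAvg n ε c u) / (1 + lam)) (f : ZMod n → ℝ) :
    symObjective n ε y lam c f =
      symObjective n ε y lam c fstar + (1 + lam) * ∑ u, (f u - fstar u) ^ 2 := by
  rw [symObjective_eq_sum, symObjective_eq_sum, mul_sum, ← sum_add_distrib]
  refine Finset.sum_congr rfl fun u _ => ?_
  have hvertex := sq_sub_add_div_card_mul_sum_sq_sub (S := Icc (-(ε : ℤ)) ε)
    (nonempty_Icc.2 (by omega)) hlam (b := fun s => c (u + s))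
    ((hstar u).trans (by rw [winAvg_eq_mean]))
  rw [hvertex (f u), hvertex (fstar u), sub_self]
  ring

/-- for fixed constant explainers `c`, the symmetric-game predictor
objective has a unique minimizer over all `f' : ZMod n → ℝ`, given pointwise by
`f'(u) = (y(u) + λ · (A c)(u)) / (1 + λ)`. -/
theorem symmetric_predictor_best_response (n ε : ℕ) [NeZero n]
    (y : ZMod n → ℝ) (lam : ℝ) (hlam : 0 ≤ lam) (c : ZMod n → ℝ) :
    ∀ fstar : ZMod n → ℝ,
      (∀ u : ZMod n, fstar u = (y u + lam * winAvg n ε c u) / (1 + lam)) →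
      (∀ f' : ZMod n → ℝ,
        symObjective n ε y lam c fstar ≤ symObjective n ε y lam c f') ∧
      (∀ f : ZMod n → ℝ,
        (∀ f' : ZMod n → ℝ,
          symObjective n ε y lam c f ≤ symObjective n ε y lam c f') →
        f = fstar) := by
  intro fstar hstar
  have hpos : 0 < 1 + lam := by linarith
  have hJ := symObjective_eq_add_sum_sq n ε y hpos.ne' c hstar
  have hsq (f : ZMod n → ℝ) : 0 ≤ ∑ u, (f u - fstar u) ^ 2 := sum_nonneg fun u _ => sq_nonneg _
  refine ⟨fun f' => by nlinarith [hJ f', hsq f'], fun f hmin => ?_⟩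
  have hzero : ∑ u, (f u - fstar u) ^ 2 = 0 := by nlinarith [hJ f, hmin fstar, hsq f]
  funext u
  have hu := congrFun ((Fintype.sum_eq_zero_iff_of_nonneg fun u => sq_nonneg _).1 hzero) u
  simpa [sub_eq_zero] using hu
end

section
/- Fix natural numbers n ≥ 1 and ε, data y : ZMod n → ℝ, and λ ≥ 0. Then the asymmetric co-operative game has exactly one Nash equilibrium (f, c), and the symmetric co-operative game has exactly one Nash equilibrium (f̃, c̃); in both cases the explainer equals the window average of the predictor (c = A f and c̃ = A f̃), the asymmetric equilibrium predictor is the unique solution of f = (1/(1+λ))·(y + λ·A f), and the symmetric equilibrium predictor is the unique solution of f̃ = (1/(1+λ))·(y + λ·A² f̃). -/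
/-- Nash equilibrium of the asymmetric co-operative game: (i) each constant
explainer `c t` minimizes the local deviation `∑_{s=-ε}^{ε} (f(t+s) - γ)²`;
(ii) the predictor `f` minimizes `∑_t [(f'(t) - y(t))² + λ (f'(t) - c(t))²]`. -/
def AsymEquilibrium (n ε : ℕ) [NeZero n] (y : ZMod n → ℝ) (lam : ℝ)
    (f c : ZMod n → ℝ) : Prop :=
  (∀ t : ZMod n, ∀ γ : ℝ,
    ∑ s ∈ Finset.Icc (-(ε : ℤ)) (ε : ℤ), (f (t + (s : ZMod n)) - c t) ^ 2 ≤
    ∑ s ∈ Finset.Icc (-(ε : ℤ)) (ε : ℤ), (f (t + (s : ZMod n)) - γ) ^ 2) ∧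
  (∀ f' : ZMod n → ℝ,
    ∑ t : ZMod n, ((f t - y t) ^ 2 + lam * (f t - c t) ^ 2) ≤
    ∑ t : ZMod n, ((f' t - y t) ^ 2 + lam * (f' t - c t) ^ 2))

/-- Nash equilibrium of the symmetric co-operative game: (i) each constant
explainer `c t` minimizes the local deviation `∑_{s=-ε}^{ε} (f(t+s) - γ)²`;
(ii) `f` minimizes the shared objective
`∑_t [(f'(t) - y(t))² + (λ/(2ε+1)) ∑_{s=-ε}^{ε} (f'(t+s) - c(t))²]`. -/
def SymEquilibrium (n ε : ℕ) [NeZero n] (y : ZMod n → ℝ) (lam : ℝ)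
    (f c : ZMod n → ℝ) : Prop :=
  (∀ t : ZMod n, ∀ γ : ℝ,
    ∑ s ∈ Finset.Icc (-(ε : ℤ)) (ε : ℤ), (f (t + (s : ZMod n)) - c t) ^ 2 ≤
    ∑ s ∈ Finset.Icc (-(ε : ℤ)) (ε : ℤ), (f (t + (s : ZMod n)) - γ) ^ 2) ∧
  (∀ f' : ZMod n → ℝ,
    ∑ t : ZMod n, ((f t - y t) ^ 2 +
      (lam / (2 * (ε : ℝ) + 1)) *
        ∑ s ∈ Finset.Icc (-(ε : ℤ)) (ε : ℤ), (f (t + (s : ZMod n)) - c t) ^ 2) ≤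
    ∑ t : ZMod n, ((f' t - y t) ^ 2 +
      (lam / (2 * (ε : ℝ) + 1)) *
        ∑ s ∈ Finset.Icc (-(ε : ℤ)) (ε : ℤ), (f' (t + (s : ZMod n)) - c t) ^ 2))

/-! Condition (i) is a least-squares problem in `γ`, minimised exactly at the window mean, so
`c = A f`. Once `c` is fixed, both predictor objectives are sums over `t` of strictly convex
quadratics in `f t`; in the symmetric game, after the substitution `u = t + s`, the value `f u`
is compared with `c (u - s)`, whose mean over the (symmetric) window is again `A c u`. Hence
`f = (y + λ A c) / (1 + λ)`, and substituting `c = A f` gives the two fixed-point equations.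
An average is 1-Lipschitz in the sup norm, so `f ↦ (y + λ A f) / (1 + λ)` (and likewise with
`A²`) is a contraction with constant `λ / (1 + λ) < 1`, and Banach's fixed point theorem gives
the unique solution, hence the unique equilibrium. -/

open Finset

theorem forall_le_iff_of_eq_add_mul_sq {φ : ℝ → ℝ} {k m : ℝ} (hk : 0 < k)
    (hφ : ∀ x, φ x = φ m + k * (x - m) ^ 2) (x : ℝ) :
    (∀ γ, φ x ≤ φ γ) ↔ x = m := by
  constructor
  · intro hx
    have h := hx m
    rw [hφ x] at h
    have : (x - m) ^ 2 = 0 := le_antisymm (by nlinarith) (sq_nonneg _)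
    exact sub_eq_zero.mp (pow_eq_zero_iff two_ne_zero |>.mp this)
  · rintro rfl γ
    rw [hφ γ]
    nlinarith [sq_nonneg (γ - x)]

theorem sum_sub_sq_eq_add_card_mul {ι : Type*} (s : Finset ι) (g : ι → ℝ) {m : ℝ}
    (hm : #s * m = ∑ i ∈ s, g i) (x : ℝ) :
    ∑ i ∈ s, (g i - x) ^ 2 = ∑ i ∈ s, (g i - m) ^ 2 + #s * (x - m) ^ 2 := by
  calc ∑ i ∈ s, (g i - x) ^ 2
      = ∑ i ∈ s, ((g i - m) ^ 2 + 2 * (m - x) * g i - (2 * (m - x) * m - (x - m) ^ 2)) :=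
        sum_congr rfl fun _ _ => by ring
    _ = ∑ i ∈ s, (g i - m) ^ 2 + 2 * (m - x) * ∑ i ∈ s, g i
          - #s * (2 * (m - x) * m - (x - m) ^ 2) := by
        rw [sum_sub_distrib, sum_add_distrib, ← mul_sum, sum_const, nsmul_eq_mul]
    _ = _ := by rw [← hm]; ring

theorem forall_sum_le_sum_iff_forall_le {ι α M : Type*} [Fintype ι] [DecidableEq ι]
    [AddCommMonoid M] [PartialOrder M] [IsOrderedCancelAddMonoid M]
    (G : ι → α → M) (f : ι → α) :
    (∀ f' : ι → α, ∑ i, G i (f i) ≤ ∑ i, G i (f' i)) ↔ ∀ i x, G i (f i) ≤ G i x := by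
  refine ⟨fun h i x => ?_, fun h f' => sum_le_sum fun i _ => h i (f' i)⟩
  have hi := h (Function.update f i x)
  rw [sum_eq_add_sum_sdiff_singleton_of_mem (mem_univ i) (fun j => G j (f j))] at hi
  simp only [Function.apply_update (fun j => G j) f, sum_update_of_mem (mem_univ i)] at hi
  exact le_of_add_le_add_right hi

theorem sum_sum_add_eq_sum_sum_sub {G κ M : Type*} [AddCommGroup G] [Fintype G]
    [AddCommMonoid M] (s : Finset κ) (e : κ → G) (F : G → G → M) :
    ∑ t, ∑ k ∈ s, F (t + e k) t = ∑ u, ∑ k ∈ s, F u (u - e k) := by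
  rw [sum_comm, sum_comm (s := univ)]
  exact sum_congr rfl fun k _ => Fintype.sum_equiv (Equiv.addRight (e k)) _ _ fun t => by simp

theorem asym_predictor_optimal_iff {lam : ℝ} (hlam : 0 ≤ lam) (a b x : ℝ) :
    (∀ z : ℝ, (x - a) ^ 2 + lam * (x - b) ^ 2 ≤ (z - a) ^ 2 + lam * (z - b) ^ 2) ↔
      x = 1 / (1 + lam) * (a + lam * b) := by
  have hpos : 0 < 1 + lam := by linarith
  refine forall_le_iff_of_eq_add_mul_sq (φ := fun z => (z - a) ^ 2 + lam * (z - b) ^ 2) hpos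
    (fun z => ?_) x
  field_simp
  ring

theorem existsUnique_prod_of_iff {α β : Type*} {P : α → β → Prop} {Q : α → Prop} (g : α → β)
    (hP : ∀ a b, P a b ↔ b = g a ∧ Q a) (hQ : ∃! a, Q a) : ∃! p : α × β, P p.1 p.2 := by
  obtain ⟨a, ha, huniq⟩ := hQ
  refine ⟨(a, g a), (hP _ _).mpr ⟨rfl, ha⟩, fun ⟨a', b'⟩ h => ?_⟩
  obtain ⟨rfl, ha'⟩ := (hP a' b').mp h
  rw [huniq a' ha']

theorem existsUnique_eq_smul_add_smul {E : Type*} [NormedAddCommGroup E] [NormedSpace ℝ E]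
    [CompleteSpace E] {T : E → E} (hT : LipschitzWith 1 T) {lam : ℝ} (hlam : 0 ≤ lam)
    (y : E) : ∃! x, x = (1 / (1 + lam)) • (y + lam • T x) := by
  have hpos : 0 < 1 + lam := by linarith
  set K : NNReal := ⟨lam / (1 + lam), by positivity⟩
  have hK : ContractingWith K fun x => (1 / (1 + lam)) • (y + lam • T x) := by
    refine ⟨?_, LipschitzWith.of_dist_le_mul fun x z => ?_⟩
    · rw [← NNReal.coe_lt_coe]
      exact (div_lt_one hpos).mpr (by linarith)
    · simp only [dist_eq_norm, ← smul_sub, add_sub_add_left_eq_sub, norm_smul,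
        Real.norm_of_nonneg hlam, Real.norm_of_nonneg (by positivity : 0 ≤ 1 / (1 + lam))]
      have hTxz := hT.dist_le_mul x z
      simp only [NNReal.coe_one, one_mul, dist_eq_norm] at hTxz
      calc 1 / (1 + lam) * (lam * ‖T x - T z‖) ≤ 1 / (1 + lam) * (lam * ‖x - z‖) := by gcongr
        _ = lam / (1 + lam) * ‖x - z‖ := by ring
  exact ⟨_, (hK.fixedPoint_isFixedPt).symm, fun x hx => hK.fixedPoint_unique hx.symm⟩

section WindowAverage

variable {n : ℕ} (ε : ℕ)

theorem card_Icc_neg_natCast : (#(Icc (-(ε : ℤ)) ε) : ℝ) = 2 * ε + 1 := by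
  rw [Int.card_Icc]; norm_cast; omega

theorem sum_Icc_add_eq_mul_winAvg (f : ZMod n → ℝ) (t : ZMod n) :
    ∑ s ∈ Icc (-(ε : ℤ)) ε, f (t + s) = (2 * ε + 1) * winAvg n ε f t := by
  unfold winAvg
  field_simp

theorem sum_Icc_sub_eq_mul_winAvg (f : ZMod n → ℝ) (t : ZMod n) :
    ∑ s ∈ Icc (-(ε : ℤ)) ε, f (t - s) = (2 * ε + 1) * winAvg n ε f t := by
  rw [← sum_Icc_add_eq_mul_winAvg]
  refine sum_equiv (Equiv.neg ℤ) (fun s => ?_) fun s _ => by simp [sub_eq_add_neg]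
  simp only [mem_Icc, Equiv.neg_apply]
  omega

theorem winAvg_sub (f g : ZMod n → ℝ) : winAvg n ε (f - g) = winAvg n ε f - winAvg n ε g := by
  funext t
  simp only [winAvg, Pi.sub_apply, sum_sub_distrib, mul_sub]

theorem explainer_optimal_iff (f : ZMod n → ℝ) (t : ZMod n) (c : ℝ) :
    (∀ γ : ℝ, ∑ s ∈ Icc (-(ε : ℤ)) ε, (f (t + s) - c) ^ 2 ≤
      ∑ s ∈ Icc (-(ε : ℤ)) ε, (f (t + s) - γ) ^ 2) ↔ c = winAvg n ε f t := by
  refine forall_le_iff_of_eq_add_mul_sq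
    (φ := fun γ => ∑ s ∈ Icc (-(ε : ℤ)) ε, (f (t + s) - γ) ^ 2)
    (k := 2 * ε + 1) (by positivity) (fun x => ?_) c
  rw [sum_sub_sq_eq_add_card_mul _ _ (by rw [card_Icc_neg_natCast, sum_Icc_add_eq_mul_winAvg]),
    card_Icc_neg_natCast]

theorem sym_predictor_optimal_iff {lam : ℝ} (hlam : 0 ≤ lam) (c : ZMod n → ℝ) (u : ZMod n)
    (a x : ℝ) :
    (∀ z : ℝ, (x - a) ^ 2 + lam / (2 * ε + 1) * ∑ s ∈ Icc (-(ε : ℤ)) ε, (x - c (u - s)) ^ 2 ≤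
      (z - a) ^ 2 + lam / (2 * ε + 1) * ∑ s ∈ Icc (-(ε : ℤ)) ε, (z - c (u - s)) ^ 2) ↔
      x = 1 / (1 + lam) * (a + lam * winAvg n ε c u) := by
  have hpos : 0 < 1 + lam := by linarith
  have hN : (0 : ℝ) < 2 * ε + 1 := by positivity
  have hwindow (z : ℝ) : ∑ s ∈ Icc (-(ε : ℤ)) ε, (z - c (u - s)) ^ 2 =
      ∑ s ∈ Icc (-(ε : ℤ)) ε, (c (u - s) - winAvg n ε c u) ^ 2 +
        (2 * ε + 1) * (z - winAvg n ε c u) ^ 2 := by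
    rw [← card_Icc_neg_natCast, sum_congr rfl fun (s : ℤ) _ => sub_sq_comm z (c (u - s))]
    exact sum_sub_sq_eq_add_card_mul _ _
      (by rw [card_Icc_neg_natCast, sum_Icc_sub_eq_mul_winAvg]) z
  refine forall_le_iff_of_eq_add_mul_sq
    (φ := fun z => (z - a) ^ 2 + lam / (2 * ε + 1) * ∑ s ∈ Icc (-(ε : ℤ)) ε, (z - c (u - s)) ^ 2)
    hpos (fun z => ?_) x
  simp only [hwindow]
  field_simp
  ring

variable [NeZero n]

theorem norm_winAvg_le (f : ZMod n → ℝ) : ‖winAvg n ε f‖ ≤ ‖f‖ := by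
  refine (pi_norm_le_iff_of_nonneg (norm_nonneg f)).mpr fun t => ?_
  have hN : (0 : ℝ) < 2 * ε + 1 := by positivity
  calc ‖winAvg n ε f t‖
      = (1 / (2 * ε + 1)) * ‖∑ s ∈ Icc (-(ε : ℤ)) ε, f (t + s)‖ := by
        rw [winAvg, norm_mul, Real.norm_of_nonneg (by positivity)]
    _ ≤ (1 / (2 * ε + 1)) * ∑ _s ∈ Icc (-(ε : ℤ)) ε, ‖f‖ := by
        gcongr
        exact (norm_sum_le _ _).trans (sum_le_sum fun s _ => norm_le_pi_norm f _)
    _ = ‖f‖ := by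
        rw [sum_const, nsmul_eq_mul, card_Icc_neg_natCast]
        field_simp

theorem lipschitzWith_winAvg : LipschitzWith 1 (winAvg n ε) :=
  LipschitzWith.of_dist_le_mul fun f g => by
    simpa only [dist_eq_norm, winAvg_sub, NNReal.coe_one, one_mul] using norm_winAvg_le ε (f - g)

end WindowAverage

section Games

variable {n : ℕ} [NeZero n] (ε : ℕ)

theorem sym_objective_reindex (y c g : ZMod n → ℝ) (κ : ℝ) :
    ∑ t, ((g t - y t) ^ 2 + κ * ∑ s ∈ Icc (-(ε : ℤ)) ε, (g (t + s) - c t) ^ 2) =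
      ∑ u, ((g u - y u) ^ 2 + κ * ∑ s ∈ Icc (-(ε : ℤ)) ε, (g u - c (u - s)) ^ 2) := by
  simp only [sum_add_distrib, ← mul_sum]
  rw [sum_sum_add_eq_sum_sum_sub _ (fun s : ℤ => (s : ZMod n)) fun u v => (g u - c v) ^ 2]

theorem asymEquilibrium_iff (y : ZMod n → ℝ) {lam : ℝ} (hlam : 0 ≤ lam) (f c : ZMod n → ℝ) :
    AsymEquilibrium n ε y lam f c ↔
      c = winAvg n ε f ∧ f = fun t => 1 / (1 + lam) * (y t + lam * winAvg n ε f t) := by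
  simp only [AsymEquilibrium, explainer_optimal_iff, ← funext_iff]
  refine and_congr_right fun hc => ?_
  subst hc
  rw [forall_sum_le_sum_iff_forall_le (fun t x => (x - y t) ^ 2 + lam * (x - winAvg n ε f t) ^ 2)]
  simp only [asym_predictor_optimal_iff hlam, funext_iff]

theorem symEquilibrium_iff (y : ZMod n → ℝ) {lam : ℝ} (hlam : 0 ≤ lam) (f c : ZMod n → ℝ) :
    SymEquilibrium n ε y lam f c ↔ c = winAvg n ε f ∧
      f = fun t => 1 / (1 + lam) * (y t + lam * winAvg n ε (winAvg n ε f) t) := by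
  simp only [SymEquilibrium, explainer_optimal_iff, ← funext_iff, sym_objective_reindex]
  refine and_congr_right fun hc => ?_
  subst hc
  rw [forall_sum_le_sum_iff_forall_le (fun u x => (x - y u) ^ 2 + lam / (2 * ε + 1) *
    ∑ s ∈ Icc (-(ε : ℤ)) ε, (x - winAvg n ε f (u - s)) ^ 2)]
  simp only [sym_predictor_optimal_iff ε hlam, funext_iff]

end Games

/-- the asymmetric game has exactly one Nash equilibrium and the
symmetric game has exactly one Nash equilibrium; in both the explainer is the
window average of the predictor; the asymmetric equilibrium predictor is the
unique solution of `f = (1/(1+λ))(y + λ A f)` and the symmetric one the unique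
solution of `f = (1/(1+λ))(y + λ A² f)`. -/
theorem unique_equilibria_of_both_games (n ε : ℕ) [NeZero n]
    (y : ZMod n → ℝ) (lam : ℝ) (hlam : 0 ≤ lam) :
    (∃! p : (ZMod n → ℝ) × (ZMod n → ℝ), AsymEquilibrium n ε y lam p.1 p.2) ∧
    (∃! p : (ZMod n → ℝ) × (ZMod n → ℝ), SymEquilibrium n ε y lam p.1 p.2) ∧
    (∀ f c : ZMod n → ℝ, AsymEquilibrium n ε y lam f c →
      c = winAvg n ε f ∧
      f = fun t => (1 / (1 + lam)) * (y t + lam * winAvg n ε f t)) ∧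
    (∀ f c : ZMod n → ℝ, SymEquilibrium n ε y lam f c →
      c = winAvg n ε f ∧
      f = fun t => (1 / (1 + lam)) * (y t + lam * winAvg n ε (winAvg n ε f) t)) ∧
    (∃! f : ZMod n → ℝ,
      f = fun t => (1 / (1 + lam)) * (y t + lam * winAvg n ε f t)) ∧
    (∃! f : ZMod n → ℝ,
      f = fun t => (1 / (1 + lam)) * (y t + lam * winAvg n ε (winAvg n ε f) t)) := by
  have hA : LipschitzWith 1 (winAvg n ε) := lipschitzWith_winAvg ε
  have hfixA := existsUnique_eq_smul_add_smul hA hlam y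
  have hfixS := existsUnique_eq_smul_add_smul (by simpa using hA.comp hA) hlam y
  exact ⟨existsUnique_prod_of_iff _ (asymEquilibrium_iff ε y hlam) hfixA,
    existsUnique_prod_of_iff _ (symEquilibrium_iff ε y hlam) hfixS,
    fun f c => (asymEquilibrium_iff ε y hlam f c).mp,
    fun f c => (symEquilibrium_iff ε y hlam f c).mp, hfixA, hfixS⟩
end
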